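/- For every integer n ≥ 1 and real numbers θ > 0, ρ > 0, γ ≥ 0, one has ∫₀¹ θ · e^{γx} · (1 − (1-x)^n) / (x · (1-x)^{1-ρ}) dx = θ · Σ_{k=0}^{n-1} 1/(k+ρ) + θ · Σ_{m=1}^∞ (γ^m / m) · ( 1/(ρ)_m − 1/(n+ρ)_m ), where the integral is over the open unit interval and in particular is finite. -/

import Mathlib

/-!
Expanding `e^{γx}` in its power series reduces the integral to the moments
`∫₀¹ x^m h(x) dx` of `h(x) = (1 - (1-x)^n) / (x (1-x)^{1-ρ})`; termwise integration is
legitimate because on `(0, 1)` the `m`-th term is dominated by `|γ|^m / m! · |h|`.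
The zeroth moment is computed from the geometric sum `h(x) = ∑_{j<n} (1-x)^{j+ρ-1}`, and the
higher ones from `x h(x) = (1-x)^{ρ-1} - (1-x)^{n+ρ-1}` and the Beta integral
`∫₀¹ x^k (1-x)^{s-1} dx = k! / (s)_{k+1}`.
-/

open scoped BigOperators

/-- The real Pochhammer symbol `(a)_m = a (a+1) ⋯ (a+m-1)`. -/
noncomputable def pochR (a : ℝ) (m : ℕ) : ℝ := (ascPochhammer ℝ m).eval a

open MeasureTheory Set Real Nat

lemma pochR_succ_right (a : ℝ) (m : ℕ) : pochR a (m + 1) = pochR a m * (a + m) :=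
  ascPochhammer_succ_eval m a

lemma pochR_succ_left (a : ℝ) (m : ℕ) : pochR a (m + 1) = a * pochR (a + 1) m := by
  simp [pochR, ascPochhammer_succ_left, Polynomial.eval_comp]

lemma pochR_pos {a : ℝ} (ha : 0 < a) (m : ℕ) : 0 < pochR a m :=
  ascPochhammer_pos m a ha

lemma integrableOn_one_sub_rpow {s : ℝ} (hs : 0 < s) :
    IntegrableOn (fun x : ℝ => (1 - x) ^ (s - 1)) (Ioo 0 1) := by
  have h : IntervalIntegrable (fun x : ℝ => x ^ (s - 1)) volume 0 1 :=
    intervalIntegral.intervalIntegrable_rpow' (by linarith)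
  simpa using (h.comp_sub_left 1).symm.1.mono_set Ioo_subset_Ioc_self

lemma integral_one_sub_rpow {s : ℝ} (hs : 0 < s) :
    ∫ x in Ioo (0 : ℝ) 1, (1 - x) ^ (s - 1) = 1 / s := by
  rw [← integral_Ioc_eq_integral_Ioo, ← intervalIntegral.integral_of_le zero_le_one,
    intervalIntegral.integral_comp_sub_left (fun y : ℝ => y ^ (s - 1)) 1, sub_self, sub_zero,
    integral_rpow (Or.inl (by linarith)), sub_add_cancel, one_rpow, zero_rpow hs.ne']
  ring

lemma integrableOn_pow_mul_one_sub_rpow (k : ℕ) {s : ℝ} (hs : 0 < s) :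
    IntegrableOn (fun x : ℝ => x ^ k * (1 - x) ^ (s - 1)) (Ioo 0 1) := by
  refine (integrableOn_one_sub_rpow hs).bdd_mul (c := 1)
    (continuous_pow k).aestronglyMeasurable ?_
  filter_upwards [ae_restrict_mem measurableSet_Ioo] with x hx
  rw [norm_pow, Real.norm_of_nonneg hx.1.le]
  exact pow_le_one₀ hx.1.le hx.2.le

lemma integral_pow_mul_one_sub_rpow (k : ℕ) {s : ℝ} (hs : 0 < s) :
    ∫ x in Ioo (0 : ℝ) 1, x ^ k * (1 - x) ^ (s - 1) = k ! / pochR s (k + 1) := by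
  induction k generalizing s with
  | zero => simp [pochR, integral_one_sub_rpow hs]
  | succ k ih =>
    have hs1 : 0 < s + 1 := by linarith
    have hsplit : ∀ x ∈ Ioo (0 : ℝ) 1, x ^ (k + 1) * (1 - x) ^ (s - 1)
        = x ^ k * (1 - x) ^ (s - 1) - x ^ k * (1 - x) ^ (s + 1 - 1) := by
      intro x hx
      rw [add_sub_cancel_right, ← sub_add_cancel s 1, rpow_add_one (by linarith [hx.2]),
        add_sub_cancel_right]
      ring
    rw [setIntegral_congr_fun measurableSet_Ioo hsplit,
      integral_sub (integrableOn_pow_mul_one_sub_rpow k hs)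
        (integrableOn_pow_mul_one_sub_rpow k hs1), ih hs, ih hs1,
      pochR_succ_left s (k + 1), pochR_succ_left s k, pochR_succ_right (s + 1) k, factorial_succ]
    have := pochR_pos hs1 k
    push_cast
    field_simp
    ring

section Exponential

variable {μ : Measure ℝ} {h : ℝ → ℝ}

lemma MeasureTheory.Integrable.exp_mul (hh : Integrable h μ) (hx : ∀ᵐ x ∂μ, |x| ≤ 1) (γ : ℝ) :
    Integrable (fun x => exp (γ * x) * h x) μ := by
  refine hh.bdd_mul (c := exp |γ|) (by fun_prop) ?_
  filter_upwards [hx] with x hx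
  rw [norm_of_nonneg (exp_pos _).le, exp_le_exp]
  calc γ * x ≤ |γ * x| := le_abs_self _
    _ = |γ| * |x| := abs_mul γ x
    _ ≤ |γ| := mul_le_of_le_one_right (abs_nonneg γ) hx

lemma hasSum_integral_exp_mul (hh : Integrable h μ) (hx : ∀ᵐ x ∂μ, |x| ≤ 1) (γ : ℝ) :
    HasSum (fun m : ℕ => γ ^ m / m ! * ∫ x, x ^ m * h x ∂μ) (∫ x, exp (γ * x) * h x ∂μ) := by
  set F : ℕ → ℝ → ℝ := fun m x => (γ * x) ^ m / m ! * h x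
  have hbound : ∀ m, ∀ᵐ x ∂μ, ‖(γ * x) ^ m / (m ! : ℝ)‖ ≤ |γ| ^ m / m ! := by
    intro m
    filter_upwards [hx] with x hx
    rw [norm_div, norm_pow, norm_mul, Real.norm_eq_abs, Real.norm_eq_abs, RCLike.norm_natCast]
    gcongr
    exact mul_le_of_le_one_right (abs_nonneg γ) hx
  have hF_int : ∀ m, Integrable (F m) μ := fun m => hh.bdd_mul (by fun_prop) (hbound m)
  have hF_norm : ∀ m, ∫ x, ‖F m x‖ ∂μ ≤ |γ| ^ m / m ! * ∫ x, ‖h x‖ ∂μ := by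
    intro m
    rw [← integral_const_mul]
    refine integral_mono_ae (hF_int m).norm (hh.norm.const_mul _) ?_
    filter_upwards [hbound m] with x hx
    rw [norm_mul]
    exact mul_le_mul_of_nonneg_right hx (norm_nonneg _)
  have hF_sum : Summable fun m => ∫ x, ‖F m x‖ ∂μ :=
    .of_nonneg_of_le (fun m => integral_nonneg fun x => norm_nonneg _) hF_norm
      ((summable_pow_div_factorial |γ|).mul_right _)
  have hF_tsum : ∀ x, ∑' m, F m x = exp (γ * x) * h x := fun x => by
    rw [exp_eq_exp_ℝ, ← ((NormedSpace.expSeries_div_hasSum_exp (γ * x)).mul_right (h x)).tsum_eq]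
  have hF_integral : ∀ m, ∫ x, F m x ∂μ = γ ^ m / m ! * ∫ x, x ^ m * h x ∂μ := fun m => by
    rw [← integral_const_mul]
    congr 1 with x
    simp only [F, mul_pow]
    ring
  simpa only [hF_integral, hF_tsum] using hasSum_integral_of_summable_integral_norm hF_int hF_sum

end Exponential

noncomputable def accessoryDensity (n : ℕ) (ρ x : ℝ) : ℝ :=
  (1 - (1 - x) ^ n) / (x * (1 - x) ^ (1 - ρ))

section AccessoryDensity

variable (n : ℕ) {ρ : ℝ}

lemma accessoryDensity_eq_sum {x : ℝ} (hx : x ∈ Ioo (0 : ℝ) 1) :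
    accessoryDensity n ρ x = ∑ j ∈ Finset.range n, (1 - x) ^ ((j : ℝ) + ρ - 1) := by
  have hx1 : 0 < 1 - x := by linarith [hx.2]
  have hgeom : 1 - (1 - x) ^ n = x * ∑ j ∈ Finset.range n, (1 - x) ^ j := by
    linear_combination geom_sum_mul (1 - x) n
  simp_rw [accessoryDensity, hgeom, mul_div_mul_left _ _ hx.1.ne', Finset.sum_div,
    show ∀ j : ℕ, (j : ℝ) + ρ - 1 = j - (1 - ρ) from fun j => by ring, rpow_sub hx1, rpow_natCast]

lemma mul_accessoryDensity {x : ℝ} (hx : x ∈ Ioo (0 : ℝ) 1) :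
    x * accessoryDensity n ρ x = (1 - x) ^ (ρ - 1) - (1 - x) ^ ((n : ℝ) + ρ - 1) := by
  have hx1 : 0 < 1 - x := by linarith [hx.2]
  rw [show (n : ℝ) + ρ - 1 = n - (1 - ρ) by ring, show ρ - 1 = (0 : ℝ) - (1 - ρ) by ring,
    rpow_sub hx1 (n : ℝ), rpow_sub hx1 0, rpow_zero, rpow_natCast, accessoryDensity, ← mul_div_assoc,
    mul_div_mul_left _ _ hx.1.ne', sub_div]

lemma integrableOn_accessoryDensity (hρ : 0 < ρ) :
    IntegrableOn (accessoryDensity n ρ) (Ioo 0 1) := by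
  exact IntegrableOn.congr_fun (integrable_finsetSum (Finset.range n) fun (j : ℕ) _ =>
    integrableOn_one_sub_rpow (s := (j : ℝ) + ρ) (by positivity))
    (fun x hx => (accessoryDensity_eq_sum n hx).symm) measurableSet_Ioo

lemma integral_accessoryDensity (hρ : 0 < ρ) :
    ∫ x in Ioo (0 : ℝ) 1, accessoryDensity n ρ x = ∑ k ∈ Finset.range n, 1 / ((k : ℝ) + ρ) := by
  rw [setIntegral_congr_fun measurableSet_Ioo fun x hx => accessoryDensity_eq_sum n hx,
    integral_finsetSum (Finset.range n) fun (j : ℕ) _ =>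
      integrableOn_one_sub_rpow (s := (j : ℝ) + ρ) (by positivity)]
  exact Finset.sum_congr rfl fun j _ => integral_one_sub_rpow (by positivity)

lemma integral_pow_succ_mul_accessoryDensity (hρ : 0 < ρ) (m : ℕ) :
    ∫ x in Ioo (0 : ℝ) 1, x ^ (m + 1) * accessoryDensity n ρ x
      = m ! * (1 / pochR ρ (m + 1) - 1 / pochR ((n : ℝ) + ρ) (m + 1)) := by
  have hnρ : 0 < (n : ℝ) + ρ := by positivity
  have hsplit : ∀ x ∈ Ioo (0 : ℝ) 1, x ^ (m + 1) * accessoryDensity n ρ x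
      = x ^ m * (1 - x) ^ (ρ - 1) - x ^ m * (1 - x) ^ ((n : ℝ) + ρ - 1) := fun x hx => by
    rw [pow_succ, mul_assoc, mul_accessoryDensity n hx, mul_sub]
  rw [setIntegral_congr_fun measurableSet_Ioo hsplit,
    integral_sub (integrableOn_pow_mul_one_sub_rpow m hρ) (integrableOn_pow_mul_one_sub_rpow m hnρ),
    integral_pow_mul_one_sub_rpow m hρ, integral_pow_mul_one_sub_rpow m hnρ]
  ring

end AccessoryDensity

theorem expected_pangenome_size_integral_general
    (n : ℕ) (θ ρ γ : ℝ) (hρ : 0 < ρ) :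
    MeasureTheory.IntegrableOn
      (fun x : ℝ => θ * Real.exp (γ * x) * (1 - (1 - x) ^ n) / (x * (1 - x) ^ (1 - ρ)))
      (Set.Ioo 0 1) ∧
    ∫ x in Set.Ioo (0 : ℝ) 1,
        θ * Real.exp (γ * x) * (1 - (1 - x) ^ n) / (x * (1 - x) ^ (1 - ρ)) =
      θ * ∑ k ∈ Finset.range n, 1 / ((k : ℝ) + ρ) +
        θ * ∑' m : ℕ,
          γ ^ (m + 1) / (m + 1) *
            (1 / pochR ρ (m + 1) - 1 / pochR ((n : ℝ) + ρ) (m + 1)) := by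
  have hintegrand : (fun x : ℝ => θ * exp (γ * x) * (1 - (1 - x) ^ n) / (x * (1 - x) ^ (1 - ρ)))
      = fun x => θ * (exp (γ * x) * accessoryDensity n ρ x) := by
    ext x
    rw [accessoryDensity]
    ring
  have hD := integrableOn_accessoryDensity n hρ
  have hunit : ∀ᵐ x ∂volume.restrict (Ioo (0 : ℝ) 1), |x| ≤ 1 := by
    filter_upwards [ae_restrict_mem measurableSet_Ioo] with x hx
    exact abs_le.2 ⟨by linarith [hx.1], hx.2.le⟩
  have hseries := hasSum_integral_exp_mul hD hunit γ
  rw [hintegrand, integral_const_mul, ← hseries.tsum_eq, hseries.summable.tsum_eq_zero_add]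
  refine ⟨(hD.exp_mul hunit γ).const_mul θ, ?_⟩
  simp only [pow_zero, one_mul, factorial_zero, cast_one, div_one,
    integral_accessoryDensity n hρ, integral_pow_succ_mul_accessoryDensity n hρ, mul_add]
  congr 2
  refine tsum_congr fun m => ?_
  rw [factorial_succ]
  push_cast
  field_simp

/-- For `n ≥ 1`, `θ > 0`, `ρ > 0`, `γ ≥ 0`, the Poisson random field integral for the
expected accessory genome size is finite and
`∫₀¹ θ e^{γx} (1-(1-x)^n)/(x (1-x)^{1-ρ}) dx
  = θ Σ_{k=0}^{n-1} 1/(k+ρ) + θ Σ_{m≥1} (γ^m/m)(1/(ρ)_m − 1/(n+ρ)_m)`. -/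
theorem expected_pangenome_size_integral
    (n : ℕ) (hn : 1 ≤ n) (θ ρ γ : ℝ) (hθ : 0 < θ) (hρ : 0 < ρ) (hγ : 0 ≤ γ) :
    MeasureTheory.IntegrableOn
      (fun x : ℝ => θ * Real.exp (γ * x) * (1 - (1 - x) ^ n) / (x * (1 - x) ^ (1 - ρ)))
      (Set.Ioo 0 1) ∧
    ∫ x in Set.Ioo (0 : ℝ) 1,
        θ * Real.exp (γ * x) * (1 - (1 - x) ^ n) / (x * (1 - x) ^ (1 - ρ)) =
      θ * ∑ k ∈ Finset.range n, 1 / ((k : ℝ) + ρ) +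
        θ * ∑' m : ℕ,
          γ ^ (m + 1) / (m + 1) *
            (1 / pochR ρ (m + 1) - 1 / pochR ((n : ℝ) + ρ) (m + 1)) :=
  expected_pangenome_size_integral_general n θ ρ γ hρ
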